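/- For any class F ⊆ [0,1]^X and α > 0: for all α' ≥ 4α, the α-augmented class F^α satisfies sfat_{α'}(F^α) ≤ sfat_{α'/2}(F). -/

import Mathlib

/-- The node of a binary tree at depth `t` along the sign path `ε` is indexed by the
prefix `(ε 0, …, ε (t-1))`. -/
def pathPrefix (ε : ℕ → Bool) (t : ℕ) : List Bool := List.ofFn (fun i : Fin t => ε i)

/-- The pair of trees `(x, s)` of depth `d` is `α`-shattered by `F`: for every sign
pattern `ε` there is `f ∈ F` achieving margin `α/2` with the prescribed sign at every
node along the path `ε`. -/
def Shatters {Z : Type*} (F : Set (Z → ℝ)) (α : ℝ) (d : ℕ)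
    (x : List Bool → Z) (s : List Bool → ℝ) : Prop :=
  ∀ ε : ℕ → Bool, ∃ f ∈ F, ∀ t < d,
    (if ε t then f (x (pathPrefix ε t)) - s (pathPrefix ε t)
      else s (pathPrefix ε t) - f (x (pathPrefix ε t))) ≥ α / 2

/-- `F` `α`-shatters some pair of trees of depth `d`. -/
def IsShattered {Z : Type*} (F : Set (Z → ℝ)) (α : ℝ) (d : ℕ) : Prop :=
  ∃ x s, Shatters F α d x s

/-- The sequential fat-shattering dimension of `F` at scale `α`: the largest depth `d`
(possibly `⊤`) such that some pair of trees of depth `d` is `α`-shattered by `F`. -/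
noncomputable def sfat {Z : Type*} (F : Set (Z → ℝ)) (α : ℝ) : ℕ∞ :=
  sSup {n : ℕ∞ | ∃ d : ℕ, n = (d : ℕ∞) ∧ IsShattered F α d}

/-- The `α`-augmented class: all `[0,1]`-valued functions within uniform distance `α`
of some member of `F`. -/
def augClass {X : Type*} (F : Set (X → ℝ)) (α : ℝ) : Set (X → ℝ) :=
  {f' | (∀ x, f' x ∈ Set.Icc (0:ℝ) 1) ∧ ∃ f ∈ F, ∀ x, |f' x - f x| ≤ α}

theorem Shatters.of_forall_exists_abs_sub_le {Z : Type*} {F G : Set (Z → ℝ)} {α β δ : ℝ}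
    {d : ℕ} {x : List Bool → Z} {s : List Bool → ℝ} (hβ : β + 2 * δ ≤ α)
    (hGF : ∀ g ∈ G, ∃ f ∈ F, ∀ z, |g z - f z| ≤ δ) (h : Shatters G α d x s) :
    Shatters F β d x s := by
  intro ε
  obtain ⟨g, hg, hmargin⟩ := h ε
  obtain ⟨f, hf, hclose⟩ := hGF g hg
  refine ⟨f, hf, fun t ht => ?_⟩
  have hgt := hmargin t ht
  have hfg := abs_le.mp (hclose (x (pathPrefix ε t)))
  split_ifs at hgt ⊢ <;> linarith [hfg.1, hfg.2]

theorem sfat_le_sfat_of_isShattered_imp {Z : Type*} {F G : Set (Z → ℝ)} {α β : ℝ}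
    (h : ∀ d, IsShattered G α d → IsShattered F β d) : sfat G α ≤ sfat F β :=
  sSup_le_sSup fun _ ⟨d, hn, hd⟩ => ⟨d, hn, h d hd⟩

theorem stmt6_general {X : Type*} (F : Set (X → ℝ)) (α : ℝ)
    (α' : ℝ) (hα' : 4 * α ≤ α') :
    sfat (augClass F α) α' ≤ sfat F (α' / 2) :=
  sfat_le_sfat_of_isShattered_imp fun _ ⟨x, s, h⟩ =>
    ⟨x, s, h.of_forall_exists_abs_sub_le (by linarith) fun _ hg => hg.2⟩

/-- for any `α > 0` and any `α' ≥ 4α`, `sfat_{α'}(F^α) ≤ sfat_{α'/2}(F)`. -/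
theorem stmt6 {X : Type*} (F : Set (X → ℝ)) (α : ℝ) (hα : 0 < α)
    (α' : ℝ) (hα' : 4 * α ≤ α') :
    sfat (augClass F α) α' ≤ sfat F (α' / 2) :=
  stmt6_general F α α' hα'
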